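/- arXiv:2407.06661 — 3 statements merged into one kernel-verified Lean document; each statement's English description precedes it below -/
import Mathlib

section
/- Let $c > 0$ and $t > 0$ be real numbers. Then for every integer $n \ge 1$ there exists exactly one real number $x \in (n\pi, (n+1)\pi)$ such that $\tan(x) = c \tanh(t x)$. -/
/-!
On every interval of `x > 0` avoiding the poles of `tan`, `φ x = tan x / tanh (t x)` is
strictly increasing: the numerator of `φ'` is `sinh (t x) cosh (t x) - t sin x cos x`, which is
positive because `t sin x cos x = t sin (2x) / 2 < t x < sinh (t x) ≤ sinh (t x) cosh (t x)`.
On `(nπ, (n+1)π)` the right-hand side `c tanh (t x)` is positive, so every solution lies in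
`(nπ, nπ + π/2)`, where the equation reads `φ x = c`. There `φ` rises continuously from
`φ (nπ) = 0` past `φ (nπ + arctan c) = c / tanh (t (nπ + arctan c)) > c`, which gives exactly
one solution.
-/

open Real Set

lemma Real.tanh_pos {x : ℝ} (hx : 0 < x) : 0 < tanh x := by
  rw [tanh_eq_sinh_div_cosh]
  exact div_pos (sinh_pos_iff.mpr hx) (cosh_pos x)

lemma Real.hasDerivAt_tanh (x : ℝ) : HasDerivAt tanh (1 / cosh x ^ 2) x := by
  have h := (hasDerivAt_sinh x).div (hasDerivAt_cosh x) (cosh_pos x).ne'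
  rw [show tanh = sinh / cosh from funext tanh_eq_sinh_div_cosh]
  exact h.congr_deriv (by rw [← cosh_sq_sub_sinh_sq x]; ring)

lemma mul_sin_mul_cos_lt_sinh_mul_cosh {t x : ℝ} (ht : 0 < t) (hx : 0 < x) :
    t * (sin x * cos x) < sinh (t * x) * cosh (t * x) := by
  have htx : 0 < t * x := mul_pos ht hx
  calc t * (sin x * cos x) = t * (sin (2 * x) / 2) := by rw [sin_two_mul]; ring
    _ < t * x := by gcongr; linarith [sin_lt (by positivity : 0 < 2 * x)]
    _ < sinh (t * x) := self_lt_sinh_iff.mpr htx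
    _ ≤ sinh (t * x) * cosh (t * x) :=
      le_mul_of_one_le_right (sinh_pos_iff.mpr htx).le (one_le_cosh _)

lemma hasDerivAt_tan_div_tanh_mul {t x : ℝ} (hcos : cos x ≠ 0) (htx : t * x ≠ 0) :
    HasDerivAt (fun y => tan y / tanh (t * y))
      ((sinh (t * x) * cosh (t * x) - t * (sin x * cos x)) / (cos x * sinh (t * x)) ^ 2) x := by
  have htanh : HasDerivAt (fun y => tanh (t * y)) (1 / cosh (t * x) ^ 2 * t) x :=
    (hasDerivAt_tanh (t * x)).comp x (by simpa using (hasDerivAt_id x).const_mul t)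
  have hsinh : sinh (t * x) ≠ 0 := sinh_ne_zero.mpr htx
  have hcosh : cosh (t * x) ≠ 0 := (cosh_pos (t * x)).ne'
  have htanh_ne : tanh (t * x) ≠ 0 := by
    rw [tanh_eq_sinh_div_cosh]
    exact div_ne_zero hsinh hcosh
  refine ((hasDerivAt_tan hcos).div htanh htanh_ne).congr_deriv ?_
  rw [tan_eq_sin_div_cos, tanh_eq_sinh_div_cosh]
  field_simp

lemma continuousOn_tan_div_tanh_mul {t : ℝ} (ht : 0 < t) {s : Set ℝ} (hpos : ∀ x ∈ s, 0 < x)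
    (hcos : ∀ x ∈ s, cos x ≠ 0) : ContinuousOn (fun x => tan x / tanh (t * x)) s :=
  fun x hx => (hasDerivAt_tan_div_tanh_mul (hcos x hx)
    (mul_pos ht (hpos x hx)).ne').continuousAt.continuousWithinAt

lemma strictMonoOn_tan_div_tanh_mul {t : ℝ} (ht : 0 < t) {s : Set ℝ} (hs : Convex ℝ s)
    (hpos : ∀ x ∈ s, 0 < x) (hcos : ∀ x ∈ s, cos x ≠ 0) :
    StrictMonoOn (fun x => tan x / tanh (t * x)) s := by
  refine strictMonoOn_of_hasDerivWithinAt_pos hs (continuousOn_tan_div_tanh_mul ht hpos hcos)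
    (fun x hx => (hasDerivAt_tan_div_tanh_mul (hcos x (interior_subset hx))
      (mul_pos ht (hpos x (interior_subset hx))).ne').hasDerivWithinAt) fun x hx => ?_
  have hx := interior_subset hx
  have hden : cos x * sinh (t * x) ≠ 0 :=
    mul_ne_zero (hcos x hx) (sinh_pos_iff.mpr (mul_pos ht (hpos x hx))).ne'
  exact div_pos (sub_pos.mpr (mul_sin_mul_cos_lt_sinh_mul_cosh ht (hpos x hx)))
    (pow_two_pos_of_ne_zero hden)

lemma Real.cos_ne_zero_of_mem_Ioo_nat_mul_pi {n : ℕ} {x : ℝ}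
    (hx : x ∈ Ioo (n * π - π / 2) (n * π + π / 2)) : cos x ≠ 0 := by
  intro h
  have hpos : 0 < cos (x - n * π) := cos_pos_of_mem_Ioo ⟨by linarith [hx.1], by linarith [hx.2]⟩
  rw [cos_sub_nat_mul_pi, h, mul_zero] at hpos
  exact hpos.false

lemma Real.lt_nat_mul_pi_add_pi_div_two_of_tan_pos {n : ℕ} {x : ℝ} (hx : x < (n + 1) * π)
    (htan : 0 < tan x) : x < n * π + π / 2 := by
  by_contra! h
  rw [← tan_sub_nat_mul_pi x (n + 1)] at htan
  push_cast at htan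
  exact htan.not_ge (tan_nonpos_of_nonpos_of_neg_pi_div_two_le (by linarith) (by linarith))

lemma pos_of_mem_Ioo_nat_mul_pi {n : ℕ} (hn : 1 ≤ n) {x : ℝ}
    (hx : x ∈ Ioo (n * π - π / 2) (n * π + π / 2)) : 0 < x := by
  have : (1 : ℝ) ≤ n := by exact_mod_cast hn
  nlinarith [hx.1, pi_pos]

lemma exists_tan_div_tanh_mul_eq {c t : ℝ} (hc : 0 < c) (ht : 0 < t) {n : ℕ} (hn : 1 ≤ n) :
    ∃ x ∈ Ioo (n * π) (n * π + π / 2), tan x / tanh (t * x) = c := by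
  set x₀ := n * π + arctan c
  have hx₀ : n * π < x₀ := lt_add_of_pos_right _ (arctan_pos.mpr hc)
  have hIcc : Icc (n * π) x₀ ⊆ Ioo (n * π - π / 2) (n * π + π / 2) :=
    Icc_subset_Ioo (by linarith [pi_pos]) (by linarith [arctan_lt_pi_div_two c])
  have hcont := (continuousOn_tan_div_tanh_mul ht (fun _ hx => pos_of_mem_Ioo_nat_mul_pi hn hx)
    fun _ hx => cos_ne_zero_of_mem_Ioo_nat_mul_pi hx).mono hIcc
  have h_start : tan (n * π) / tanh (t * (n * π)) = 0 := by simp [tan_nat_mul_pi]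
  have h_end : c < tan x₀ / tanh (t * x₀) := by
    have htan : tan x₀ = c := by simp only [x₀]; rw [add_comm, tan_add_nat_mul_pi, tan_arctan]
    rw [htan, lt_div_iff₀ (tanh_pos (mul_pos ht (by positivity)))]
    exact mul_lt_of_lt_one_right hc (tanh_lt_one _)
  obtain ⟨x, hx, hφx⟩ := intermediate_value_Ioo hx₀.le hcont (by rw [h_start]; exact ⟨hc, h_end⟩)
  exact ⟨x, ⟨hx.1, (hIcc (Ioo_subset_Icc_self hx)).2⟩, hφx⟩

/-- Root localization for the dispersion relation (Section 5.1): for positive constants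
`c` and `t`, each interval `(nπ, (n+1)π)` with `n ≥ 1` contains exactly one solution of
`tan x = c · tanh (t x)`. -/
theorem stmt_14 (c t : ℝ) (hc : 0 < c) (ht : 0 < t) (n : ℕ) (hn : 1 ≤ n) :
    ∃! x : ℝ, x ∈ Set.Ioo ((n : ℝ) * Real.pi) (((n : ℝ) + 1) * Real.pi) ∧
      Real.tan x = c * Real.tanh (t * x) := by
  have h_iff : ∀ x, 0 < x → (tan x = c * tanh (t * x) ↔ tan x / tanh (t * x) = c) :=
    fun x hx => (div_eq_iff (tanh_pos (mul_pos ht hx)).ne').symm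
  have hmono := strictMonoOn_tan_div_tanh_mul ht (convex_Ioo (n * π - π / 2) (n * π + π / 2))
    (fun _ hx => pos_of_mem_Ioo_nat_mul_pi hn hx) fun _ hx => cos_ne_zero_of_mem_Ioo_nat_mul_pi hx
  obtain ⟨x, hx, hφx⟩ := exists_tan_div_tanh_mul_eq hc ht hn
  have hx_pos : 0 < x := lt_of_le_of_lt (by positivity) hx.1
  refine ⟨x, ⟨⟨hx.1, by linarith [hx.2, pi_pos]⟩, (h_iff x hx_pos).mpr hφx⟩, ?_⟩
  rintro y ⟨hy, hy_eq⟩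
  have hy_pos : 0 < y := lt_of_le_of_lt (by positivity) hy.1
  have hy_lt : y < n * π + π / 2 := lt_nat_mul_pi_add_pi_div_two_of_tan_pos hy.2
    (hy_eq ▸ mul_pos hc (tanh_pos (mul_pos ht hy_pos)))
  exact hmono.injOn ⟨by linarith [hy.1, pi_pos], hy_lt⟩ ⟨by linarith [hx.1, pi_pos], hx.2⟩
    (((h_iff y hy_pos).mp hy_eq).trans hφx.symm)
end

section
/- Let $s > 0$ and $x > 0$ be real numbers, and let $\mu \in \mathbb{C}$ satisfy $\cos(\mu)\sinh(s\mu) - x \sin(\mu)\cosh(s\mu) = 0$ (complex trigonometric and hyperbolic functions). Then $\mu$ is either real or purely imaginary, i.e. $\operatorname{Im}(\mu) = 0$ or $\operatorname{Re}(\mu) = 0$. -/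
/-! With `μ = a + bi`, the relation says `A = x B` for `A = cos μ sinh (sμ)`, `B = sin μ cosh (sμ)`
and real `x`, so `Im (A · conj B) = 0`: this is the vanishing of the determinant of the real
`2 × 2` system. Product-to-sum formulas give
`4 Im (A · conj B) = sin 2a sin 2sb - sinh 2sa sinh 2b`, and when `ab ≠ 0` the second term
strictly dominates, since `|sin u| ≤ |u|` and `|u| < |sinh u|` for `u ≠ 0`. -/

open Complex ComplexConjugate

theorem Complex.im_mul_conj_eq_zero_of_eq_ofReal_mul {z w : ℂ} {x : ℝ} (h : z = x * w) :
    (z * conj w).im = 0 := by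
  rw [h, mul_assoc, mul_conj, ← ofReal_mul, ofReal_im]

theorem Complex.cos_mul_conj_sin (z : ℂ) :
    cos z * conj (sin z) = (Real.sin (2 * z.re) - Real.sinh (2 * z.im) * I) / 2 := by
  have hsum : conj z + z = (2 * z.re : ℝ) := by rw [add_comm, add_conj]
  have hdiff : conj z - z = -(2 * z.im : ℝ) * I := by
    rw [← neg_sub, sub_conj]; push_cast; ring
  have hprod : 2 * (cos z * sin (conj z)) = sin (conj z + z) + sin (conj z - z) := by
    rw [sin_add, sin_sub]; ring
  rw [← sin_conj, eq_div_iff two_ne_zero, mul_comm, hprod, hsum, hdiff, neg_mul, sin_neg,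
    sin_mul_I, ← ofReal_sin, ← ofReal_sinh]
  ring

theorem Complex.sinh_mul_conj_cosh (z : ℂ) :
    sinh z * conj (cosh z) = (Real.sinh (2 * z.re) + Real.sin (2 * z.im) * I) / 2 := by
  have hsum : z + conj z = (2 * z.re : ℝ) := by rw [add_conj]
  have hdiff : z - conj z = (2 * z.im : ℝ) * I := by rw [sub_conj]
  have hprod : 2 * (sinh z * cosh (conj z)) = sinh (z + conj z) + sinh (z - conj z) := by
    rw [sinh_add, sinh_sub]; ring
  rw [← cosh_conj, eq_div_iff two_ne_zero, mul_comm, hprod, hsum, hdiff,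
    sinh_mul_I, ← ofReal_sin, ← ofReal_sinh]

theorem Complex.im_cos_mul_sinh_mul_conj (μ : ℂ) (s : ℝ) :
    (cos μ * sinh (s * μ) * conj (sin μ * cosh (s * μ))).im
      = (Real.sin (2 * μ.re) * Real.sin (2 * (s * μ.im))
          - Real.sinh (2 * (s * μ.re)) * Real.sinh (2 * μ.im)) / 4 := by
  have hsplit : cos μ * sinh (s * μ) * conj (sin μ * cosh (s * μ))
      = (cos μ * conj (sin μ)) * (sinh (s * μ) * conj (cosh (s * μ))) := by
    rw [map_mul]; ring
  rw [hsplit, cos_mul_conj_sin, sinh_mul_conj_cosh, re_ofReal_mul, im_ofReal_mul]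
  simp only [div_eq_mul_inv, mul_im, mul_re, sub_re, sub_im, add_re, add_im, ofReal_re, ofReal_im,
    I_re, I_im, inv_re, inv_im, normSq_ofNat]
  norm_num
  ring

theorem Real.abs_sin_mul_sin_lt_abs_sinh_mul_sinh {p q r t : ℝ} (h : p * q = r * t)
    (hr : r ≠ 0) (ht : t ≠ 0) : |sin p * sin q| < |sinh r * sinh t| :=
  calc |sin p * sin q| = |sin p| * |sin q| := abs_mul _ _
    _ ≤ |p| * |q| := mul_le_mul abs_sin_le_abs abs_sin_le_abs (abs_nonneg _) (abs_nonneg _)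
    _ = |r| * |t| := by rw [← abs_mul, h, abs_mul]
    _ < sinh |r| * sinh |t| :=
        mul_lt_mul'' (self_lt_sinh_iff.2 (abs_pos.2 hr)) (self_lt_sinh_iff.2 (abs_pos.2 ht))
          (abs_nonneg _) (abs_nonneg _)
    _ = |sinh r * sinh t| := by rw [abs_mul, abs_sinh, abs_sinh]

theorem stmt_15_general (s x : ℝ) (hs : 0 < s) (μ : ℂ)
    (h : Complex.cos μ * Complex.sinh ((s : ℂ) * μ)
        - (x : ℂ) * Complex.sin μ * Complex.cosh ((s : ℂ) * μ) = 0) :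
    μ.im = 0 ∨ μ.re = 0 := by
  by_contra! hab
  obtain ⟨hb, ha⟩ := hab
  have hrel : cos μ * sinh (s * μ) = x * (sin μ * cosh (s * μ)) := by
    rw [← mul_assoc, ← sub_eq_zero, h]
  have hdet := im_mul_conj_eq_zero_of_eq_ofReal_mul hrel
  rw [im_cos_mul_sinh_mul_conj, div_eq_zero_iff, sub_eq_zero] at hdet
  refine (Real.abs_sin_mul_sin_lt_abs_sinh_mul_sinh (by ring) ?_ ?_).ne
    (congrArg abs (hdet.resolve_right four_ne_zero))
  · exact mul_ne_zero two_ne_zero (mul_ne_zero hs.ne' ha)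
  · exact mul_ne_zero two_ne_zero hb

/-- The complex dispersion relation `cos(μ)sinh(sμ) - x sin(μ)cosh(sμ) = 0` (Section 5.1)
may have solutions only on the real and imaginary axes. -/
theorem stmt_15 (s x : ℝ) (hs : 0 < s) (hx : 0 < x) (μ : ℂ)
    (h : Complex.cos μ * Complex.sinh ((s : ℂ) * μ)
        - (x : ℂ) * Complex.sin μ * Complex.cosh ((s : ℂ) * μ) = 0) :
    μ.im = 0 ∨ μ.re = 0 :=
  stmt_15_general s x hs μ h
end

section
/- Let $N, D$ be natural numbers with $1 \le D < N$, let $k^- < 0$, set $s = \sqrt{-k^-}$, and let $a > 0$ satisfy $D s \cosh(sa)\sin(a) + (N-D) k^- \sinh(sa)\cos(a) = 0$. Define $\psi_j : [0,1] \to \mathbb{R}$ by $\psi_j(x) = \frac{\sin(a)}{\sinh(sa)}\sinh(sax)$ for $1 \le j \le D$ and $\psi_j(x) = \sin(ax)$ for $D+1 \le j \le N$. Then: (i) $\psi_j(0) = 0$ for all $j$; (ii) $\psi_1(1) = \psi_2(1) = \cdots = \psi_N(1)$; (iii) $\sum_{j=1}^{D} \psi_j'(1) + k^- \sum_{j=D+1}^{N}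 \psi_j'(1) = 0$; (iv) $-\psi_j''(x) = k^- a^2 \psi_j(x)$ for all $x$ and all $1 \le j \le D$; and (v) $-k^- \psi_j''(x) = k^- a^2 \psi_j(x)$ for all $x$ and all $D+1 \le j \le N$. -/
/-!
On the `D` unit-conductivity edges `sinh (s a x)` solves `-ψ'' = -s²a² ψ = k⁻a² ψ`, on the others
`sin (a x)` solves `-k⁻ ψ'' = k⁻a² ψ`. The amplitude `sin a / sinh (s a)` matches the values at
the internal vertex, and with it the Kirchhoff sum is `a / sinh (s a)` times the dispersion relation.
-/

open Real Finset

section EdgeProfiles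

variable (b c : ℝ)

theorem deriv_sin_mul : deriv (fun x => sin (b * x)) = fun x => b * cos (b * x) := by
  ext x
  rw [deriv_comp_mul_left (f := sin), Real.deriv_sin, smul_eq_mul]

theorem deriv_deriv_sin_mul :
    deriv (deriv fun x => sin (b * x)) = fun x => -(b ^ 2 * sin (b * x)) := by
  ext x
  rw [deriv_sin_mul, deriv_const_mul_field, deriv_comp_mul_left (f := cos), Real.deriv_cos']
  simp only [smul_eq_mul]
  ring

theorem deriv_const_mul_sinh_mul :
    deriv (fun x => c * sinh (b * x)) = fun x => c * b * cosh (b * x) := by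
  ext x
  rw [deriv_const_mul_field, deriv_comp_mul_left (f := sinh), Real.deriv_sinh, smul_eq_mul,
    mul_assoc]

theorem deriv_deriv_const_mul_sinh_mul :
    deriv (deriv fun x => c * sinh (b * x)) = fun x => b ^ 2 * (c * sinh (b * x)) := by
  ext x
  rw [deriv_const_mul_sinh_mul, deriv_const_mul_field, deriv_comp_mul_left (f := cosh),
    Real.deriv_cosh, smul_eq_mul]
  ring

end EdgeProfiles

theorem kirchhoff_of_dispersion {d m k s a : ℝ} (hsh : sinh (s * a) ≠ 0)
    (hdisp : d * s * cosh (s * a) * sin a + m * k * sinh (s * a) * cos a = 0) :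
    d * (sin a / sinh (s * a) * (s * a) * cosh (s * a)) + k * (m * (a * cos a)) = 0 := by
  field_simp
  linear_combination a * hdisp

/-- Verification of the first family of two-phase eigenfunctions of Section 5.1: any
`a > 0` solving the dispersion relation
`D s cosh(sa) sin(a) + (N-D) k⁻ sinh(sa) cos(a) = 0` (with `s = √(-k⁻)`) gives rise to
an eigenfunction of the star-network operator with eigenvalue `k⁻ a²`, satisfying the
Dirichlet, continuity and Kirchhoff conditions. -/
theorem stmt_19 (N D : ℕ) (hD : 1 ≤ D) (hDN : D < N)
    (kneg : ℝ) (hkneg : kneg < 0)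
    (s : ℝ) (hs : s = Real.sqrt (-kneg))
    (a : ℝ) (ha : 0 < a)
    (hdisp : (D : ℝ) * s * cosh (s * a) * sin a
        + ((N : ℝ) - (D : ℝ)) * kneg * sinh (s * a) * cos a = 0)
    (ψ : ℕ → ℝ → ℝ)
    (hψ : ψ = fun j x =>
      if j ≤ D then sin a / sinh (s * a) * sinh (s * a * x) else sin (a * x)) :
    (∀ j ∈ Finset.Icc 1 N, ψ j 0 = 0) ∧
    (∀ j ∈ Finset.Icc 1 N, ψ j 1 = ψ 1 1) ∧
    ((∑ j ∈ Finset.Icc 1 D, deriv (ψ j) 1)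
      + kneg * ∑ j ∈ Finset.Icc (D + 1) N, deriv (ψ j) 1 = 0) ∧
    (∀ j ∈ Finset.Icc 1 D, ∀ x : ℝ,
      -(deriv (deriv (ψ j)) x) = kneg * a ^ 2 * ψ j x) ∧
    (∀ j ∈ Finset.Icc (D + 1) N, ∀ x : ℝ,
      -(kneg * deriv (deriv (ψ j)) x) = kneg * a ^ 2 * ψ j x) := by
  have hs2 : s ^ 2 = -kneg := hs ▸ sq_sqrt (neg_nonneg.2 hkneg.le)
  have hsh : sinh (s * a) ≠ 0 :=
    (sinh_pos_iff.2 (mul_pos (hs ▸ sqrt_pos.2 (neg_pos.2 hkneg)) ha)).ne'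
  have hψ_le : ∀ j ≤ D, ψ j = fun x => sin a / sinh (s * a) * sinh (s * a * x) :=
    fun j hj => by simp [hψ, hj]
  have hψ_gt : ∀ j, D < j → ψ j = fun x => sin (a * x) :=
    fun j hj => by simp [hψ, hj.not_ge]
  have hψ_le_one : ∀ j ≤ D, ψ j 1 = sin a := fun j hj => by
    simp [hψ_le j hj, div_mul_cancel₀ _ hsh]
  refine ⟨fun j _ => ?_, fun j _ => ?_, ?_, fun j hj x => ?_, fun j hj x => ?_⟩
  · rcases le_or_gt j D with hj | hj <;> simp [hψ_le, hψ_gt, hj]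
  · rw [hψ_le_one 1 hD]
    rcases le_or_gt j D with hj | hj
    · exact hψ_le_one j hj
    · simp [hψ_gt j hj]
  · have hderiv_le : ∀ j ∈ Icc 1 D,
        deriv (ψ j) 1 = sin a / sinh (s * a) * (s * a) * cosh (s * a) := fun j hj => by
      simp only [hψ_le j (mem_Icc.1 hj).2, deriv_const_mul_sinh_mul, mul_one]
    have hderiv_gt : ∀ j ∈ Icc (D + 1) N, deriv (ψ j) 1 = a * cos a := fun j hj => by
      simp only [hψ_gt j (mem_Icc.1 hj).1, deriv_sin_mul, mul_one]
    have hcard : (#(Icc (D + 1) N) : ℝ) = N - D := by simp [Nat.cast_sub hDN.le]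
    rw [sum_congr rfl hderiv_le, sum_congr rfl hderiv_gt, sum_const, sum_const, nsmul_eq_mul,
      nsmul_eq_mul, hcard, Nat.card_Icc, Nat.add_sub_cancel]
    exact kirchhoff_of_dispersion hsh hdisp
  · rw [hψ_le j (mem_Icc.1 hj).2, deriv_deriv_const_mul_sinh_mul, mul_pow, hs2]
    ring
  · rw [hψ_gt j (mem_Icc.1 hj).1, deriv_deriv_sin_mul]
    ring
end
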